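/- arXiv:1801.02816 — 2 statements merged into one kernel-verified Lean document; each statement's English description precedes it below -/
import Mathlib

section
/- Let F_ℓ be the set of violating edges of f both of whose endpoints are ℓ-sticky. For a length-ℓ random walk from a uniform start, the probability that the walk traverses some edge of F_ℓ and traverses no other influential edge is at least (ℓ/(4n)) · |F_ℓ|/2^n. -/
open Finset

open scoped Classical

/-- Vertices of the hypercube `{0,1}^n`. -/
abbrev Cube (n : ℕ) := Fin n → Bool

/-- Flip coordinate `i` of `x`. -/
def flipCoord {n : ℕ} (x : Cube n) (i : Fin n) : Cube n := Function.update x i (!(x i))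

/-- Position after `t` steps of the walk starting at `x` with step list `w`. -/
def posAt {n : ℕ} (x : Cube n) (w : List (Fin n)) (t : ℕ) : Cube n :=
  (w.take t).foldl flipCoord x

/-- The `t`-th traversed edge (0-indexed) of the walk is influential. -/
def influentialStep {n : ℕ} (f : Cube n → Bool) (x : Cube n) (w : List (Fin n)) (t : ℕ) : Prop :=
  f (posAt x w t) ≠ f (posAt x w (t + 1))

/-- The walk from `x` with steps `w` traverses some influential edge. -/
def hits {n : ℕ} (f : Cube n → Bool) (x : Cube n) {ℓ : ℕ} (w : Fin ℓ → Fin n) : Prop :=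
  ∃ t, t < ℓ ∧ influentialStep f x (List.ofFn w) t

/-- `x` is `ℓ`-sticky: a uniform length-`ℓ` walk from `x` avoids influential edges w.p. ≥ 1/2. -/
def sticky {n : ℕ} (f : Cube n → Bool) (ℓ : ℕ) (x : Cube n) : Prop :=
  (1 / 2 : ℝ) ≤ ((univ.filter fun w : Fin ℓ → Fin n => ¬ hits f x w).card : ℝ) / (n : ℝ) ^ ℓ

/-- Total influence `I(f) = n · Pr[f x ≠ f y]` over uniform ordered Hamming-distance-1 pairs. -/
noncomputable def totalInfluence (n : ℕ) (f : Cube n → Bool) : ℝ :=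
  (n : ℝ) * (((univ.filter fun p : Cube n × Cube n =>
      hammingDist p.1 p.2 = 1 ∧ f p.1 ≠ f p.2).card : ℝ) / ((n : ℝ) * 2 ^ n))

/-- `p` is a violating (directed upward) edge: `p.1 ≺ p.2`, `f p.1 = 1`, `f p.2 = 0`. -/
def violating {n : ℕ} (f : Cube n → Bool) (p : Cube n × Cube n) : Prop :=
  hammingDist p.1 p.2 = 1 ∧ p.1 ≤ p.2 ∧ f p.1 = true ∧ f p.2 = false

/-- The set `F_ℓ` of violating edges both of whose endpoints are `ℓ`-sticky. -/
noncomputable def Fset {n : ℕ} (f : Cube n → Bool) (ℓ : ℕ) : Finset (Cube n × Cube n) :=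
  univ.filter fun p => violating f p ∧ sticky f ℓ p.1 ∧ sticky f ℓ p.2

/-- The `t`-th traversed edge of the walk equals the (undirected) edge `q`. -/
def matchAt {n : ℕ} (x : Cube n) (w : List (Fin n)) (t : ℕ) (q : Cube n × Cube n) : Prop :=
  (posAt x w t = q.1 ∧ posAt x w (t + 1) = q.2) ∨
  (posAt x w t = q.2 ∧ posAt x w (t + 1) = q.1)

/-!
Fix a sticky violating edge `q` and a time `t < ℓ`, and count the walks that cross `q` upwards
at step `t` and cross no other influential edge. Read backwards from step `t`, such a walk is a
walk of `t` steps from `q.1`; from step `t + 1` on it is a walk of `ℓ - 1 - t` steps from `q.2`;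
it suffices that both avoid influential edges. A walk of `ℓ` steps avoiding them avoids them in
its first `t` steps, so stickiness of `q.1` leaves at least `n ^ t / 2` choices for the first
part, and likewise at least `n ^ (ℓ - 1 - t) / 2` for the second: at least `n ^ (ℓ - 1) / 4`
walks in all. For different `(q, t)` these walks are different, because step `t` is the only
influential step of the walk and it determines `q`. Summing over the `ℓ · |F_ℓ|` pairs gives the
bound.
-/

lemma exists_ofFn_eq {α : Type*} {ℓ : ℕ} (L : List α) (h : L.length = ℓ) :
    ∃ w : Fin ℓ → α, List.ofFn w = L := by
  subst h
  exact ⟨L.get, List.ofFn_get L⟩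

section Walks

variable {n : ℕ}

lemma flipCoord_flipCoord (x : Cube n) (i : Fin n) : flipCoord (flipCoord x i) i = x := by
  funext j
  by_cases h : j = i
  · subst h; simp [flipCoord]
  · simp [flipCoord, Function.update, h]

lemma foldl_flipCoord_reverse (x : Cube n) (L : List (Fin n)) :
    L.reverse.foldl flipCoord (L.foldl flipCoord x) = x := by
  induction L generalizing x with
  | nil => rfl
  | cons i L ih => simp [ih, flipCoord_flipCoord]

lemma posAt_append_of_le {L₁ : List (Fin n)} (x : Cube n) (L₂ : List (Fin n)) {s : ℕ}
    (hs : s ≤ L₁.length) : posAt x (L₁ ++ L₂) s = posAt x L₁ s := by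
  simp [posAt, List.take_append_of_le_length hs]

lemma posAt_append_length_add (x : Cube n) (L₁ L₂ : List (Fin n)) (s : ℕ) :
    posAt x (L₁ ++ L₂) (L₁.length + s) = posAt (L₁.foldl flipCoord x) L₂ s := by
  simp [posAt, List.take_append, List.take_of_length_le]

lemma posAt_reverse (x : Cube n) (L : List (Fin n)) (s : ℕ) :
    posAt (L.foldl flipCoord x) L.reverse s = posAt x L (L.length - s) := by
  have hsplit : L.foldl flipCoord x =
      (L.drop (L.length - s)).foldl flipCoord (posAt x L (L.length - s)) := by
    rw [posAt, ← List.foldl_append, List.take_append_drop]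
  rw [posAt, List.take_reverse, hsplit, foldl_flipCoord_reverse]

lemma influentialStep_append_of_lt (f : Cube n → Bool) (x : Cube n) {L₁ : List (Fin n)}
    (L₂ : List (Fin n)) {s : ℕ} (hs : s < L₁.length) :
    influentialStep f x (L₁ ++ L₂) s ↔ influentialStep f x L₁ s := by
  rw [influentialStep, influentialStep, posAt_append_of_le _ _ hs.le, posAt_append_of_le _ _ hs]

lemma influentialStep_append_length_add (f : Cube n → Bool) (x : Cube n) (L₁ L₂ : List (Fin n))
    (s : ℕ) : influentialStep f x (L₁ ++ L₂) (L₁.length + s) ↔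
      influentialStep f (L₁.foldl flipCoord x) L₂ s := by
  rw [influentialStep, influentialStep, add_assoc, posAt_append_length_add,
    posAt_append_length_add]

lemma influentialStep_reverse (f : Cube n → Bool) (x : Cube n) {L : List (Fin n)} {s : ℕ}
    (hs : s < L.length) : influentialStep f (L.foldl flipCoord x) L.reverse s ↔
      influentialStep f x L (L.length - 1 - s) := by
  rw [influentialStep, influentialStep, posAt_reverse, posAt_reverse,
    show L.length - (s + 1) = L.length - 1 - s by omega,
    show L.length - s = L.length - 1 - s + 1 by omega, ne_comm]

end Walks

section Splice

variable {n : ℕ} (f : Cube n → Bool) (e : Cube n) (i : Fin n) (A B : List (Fin n))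

lemma posAt_splice_length :
    posAt (A.foldl flipCoord e) (A.reverse ++ i :: B) A.length = e := by
  have h := posAt_append_length_add (A.foldl flipCoord e) A.reverse (i :: B) 0
  rw [List.length_reverse, add_zero, foldl_flipCoord_reverse] at h
  exact h

lemma posAt_splice_length_succ :
    posAt (A.foldl flipCoord e) (A.reverse ++ i :: B) (A.length + 1) = flipCoord e i := by
  have h := posAt_append_length_add (A.foldl flipCoord e) A.reverse (i :: B) 1
  rw [List.length_reverse, foldl_flipCoord_reverse] at h
  exact h

variable {A B} in
lemma not_influentialStep_splice
    (hA : ∀ s < A.length, ¬ influentialStep f e A s)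
    (hB : ∀ s < B.length, ¬ influentialStep f (flipCoord e i) B s)
    {s : ℕ} (hs : s < A.length + 1 + B.length) (hst : s ≠ A.length) :
    ¬ influentialStep f (A.foldl flipCoord e) (A.reverse ++ i :: B) s := by
  rcases lt_or_gt_of_ne hst with hlt | hgt
  · rw [influentialStep_append_of_lt _ _ _ (by simpa using hlt), influentialStep_reverse _ _ hlt]
    exact hA _ (by omega)
  · obtain ⟨r, rfl⟩ : ∃ r, s = A.reverse.length + ([i].length + r) :=
      ⟨s - A.length - 1, by simp; omega⟩
    rw [influentialStep_append_length_add, foldl_flipCoord_reverse, ← List.singleton_append,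
      influentialStep_append_length_add]
    exact hB _ (by simp at hs; omega)

end Splice

section Counting

variable {n : ℕ} (f : Cube n → Bool)

lemma exists_eq_flipCoord_of_hammingDist_eq_one {x y : Cube n} (h : hammingDist x y = 1) :
    ∃ i, y = flipCoord x i := by
  obtain ⟨i, hi⟩ := card_eq_one.1 h
  have hdiff : ∀ j, x j ≠ y j ↔ j = i := fun j => by simpa using Finset.ext_iff.1 hi j
  refine ⟨i, funext fun j => ?_⟩
  by_cases hji : j = i
  · subst hji
    have := (hdiff j).2 rfl
    cases hx : x j <;> cases hy : y j <;> simp_all [flipCoord]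
  · have hxy : x j = y j := not_not.1 ((not_congr (hdiff j)).2 hji)
    simp [flipCoord, hji, hxy]

lemma not_hits_iff {ℓ : ℕ} (x : Cube n) (w : Fin ℓ → Fin n) :
    ¬ hits f x w ↔ ∀ s < (List.ofFn w).length, ¬ influentialStep f x (List.ofFn w) s := by
  simp [hits]

lemma card_not_hits_le (x : Cube n) {t ℓ : ℕ} (ht : t ≤ ℓ) :
    #{w : Fin ℓ → Fin n | ¬ hits f x w} ≤ n ^ (ℓ - t) * #{a : Fin t → Fin n | ¬ hits f x a} := by
  obtain ⟨m, rfl⟩ := Nat.exists_eq_add_of_le ht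
  rw [Nat.add_sub_cancel_left, mul_comm]
  calc #{w : Fin (t + m) → Fin n | ¬ hits f x w}
      ≤ #(({a : Fin t → Fin n | ¬ hits f x a} : Finset _) ×ˢ (univ : Finset (Fin m → Fin n))) := by
        refine card_le_card_of_injOn
          (fun w => (fun j => w (Fin.castAdd m j), fun j => w (Fin.natAdd t j))) ?_ ?_
        · intro w hw
          simp only [coe_filter, coe_product, coe_univ, mem_univ, true_and, Set.mem_prod,
            Set.mem_univ, and_true, Set.mem_ofPred_eq] at hw ⊢
          rw [not_hits_iff] at hw ⊢
          intro s hs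
          have := hw s (by simp at hs ⊢; omega)
          rwa [List.ofFn_add, influentialStep_append_of_lt _ _ _ (by simpa using hs)] at this
        · intro w _ w' _ h
          simp only [Prod.mk.injEq] at h
          rw [← Fin.append_castAdd_natAdd (f := w), ← Fin.append_castAdd_natAdd (f := w'), h.1, h.2]
    _ = _ := by simp [card_product]

lemma sticky.pow_le_two_mul_card {ℓ : ℕ} {x : Cube n} (h : sticky f ℓ x) :
    n ^ ℓ ≤ 2 * #{w : Fin ℓ → Fin n | ¬ hits f x w} := by
  rcases Nat.eq_zero_or_pos (n ^ ℓ) with h0 | hpos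
  · simp [h0]
  rw [sticky, le_div_iff₀ (by exact_mod_cast hpos)] at h
  exact_mod_cast (show ((n ^ ℓ : ℕ) : ℝ) ≤ 2 * (#{w : Fin ℓ → Fin n | ¬ hits f x w} : ℕ) by
    push_cast; linarith)

end Counting

section Crossings

variable {n : ℕ} (f : Cube n → Bool)

noncomputable def crossingsOnlyAt (ℓ : ℕ) (q : Cube n × Cube n) (t : ℕ) :
    Finset (Cube n × (Fin ℓ → Fin n)) :=
  univ.filter fun p => posAt p.1 (List.ofFn p.2) t = q.1 ∧
    posAt p.1 (List.ofFn p.2) (t + 1) = q.2 ∧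
    ∀ s < ℓ, s ≠ t → ¬ influentialStep f p.1 (List.ofFn p.2) s

variable {f}

lemma violating.apply_fst_ne_apply_snd {p : Cube n × Cube n} (h : violating f p) :
    f p.1 ≠ f p.2 := by
  simp [h.2.2.1, h.2.2.2]

lemma matchAt_of_mem_crossingsOnlyAt {ℓ t : ℕ} {q : Cube n × Cube n} {p : Cube n × (Fin ℓ → Fin n)}
    (hp : p ∈ crossingsOnlyAt f ℓ q t) : matchAt p.1 (List.ofFn p.2) t q := by
  simp only [crossingsOnlyAt, mem_filter, mem_univ, true_and] at hp
  exact Or.inl ⟨hp.1, hp.2.1⟩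

lemma eq_of_influentialStep_of_mem_crossingsOnlyAt {ℓ t s : ℕ} {q : Cube n × Cube n}
    {p : Cube n × (Fin ℓ → Fin n)} (hp : p ∈ crossingsOnlyAt f ℓ q t) (hs : s < ℓ)
    (hinf : influentialStep f p.1 (List.ofFn p.2) s) : s = t := by
  simp only [crossingsOnlyAt, mem_filter, mem_univ, true_and] at hp
  by_contra hst
  exact hp.2.2 s hs hst hinf

lemma disjoint_crossingsOnlyAt {ℓ t t' : ℕ} {q q' : Cube n × Cube n} (hq : f q.1 ≠ f q.2)
    (ht : t < ℓ) (hne : (q, t) ≠ (q', t')) :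
    Disjoint (crossingsOnlyAt f ℓ q t) (crossingsOnlyAt f ℓ q' t') := by
  refine disjoint_left.2 fun p hp hp' => hne ?_
  have htt : t = t' := eq_of_influentialStep_of_mem_crossingsOnlyAt hp' ht (by
    simp only [crossingsOnlyAt, mem_filter, mem_univ, true_and] at hp
    rwa [influentialStep, hp.1, hp.2.1])
  subst htt
  simp only [crossingsOnlyAt, mem_filter, mem_univ, true_and] at hp hp'
  rw [Prod.ext (hp.1.symm.trans hp'.1) (hp.2.1.symm.trans hp'.2.1)]

variable (f)

lemma card_mul_card_le_card_crossingsOnlyAt {q : Cube n × Cube n} {i : Fin n}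
    (hq : q.2 = flipCoord q.1 i) {ℓ t : ℕ} (ht : t < ℓ) :
    #{a : Fin t → Fin n | ¬ hits f q.1 a} * #{b : Fin (ℓ - 1 - t) → Fin n | ¬ hits f q.2 b}
      ≤ #(crossingsOnlyAt f ℓ q t) := by
  set Pa : Finset (Fin t → Fin n) := {a | ¬ hits f q.1 a}
  set Pb : Finset (Fin (ℓ - 1 - t) → Fin n) := {b | ¬ hits f q.2 b}
  -- walk backwards from `q.1` along `a`, cross `q`, then walk forwards from `q.2` along `b`
  let splice : (Fin t → Fin n) × (Fin (ℓ - 1 - t) → Fin n) → Cube n × List (Fin n) := fun ab =>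
    ((List.ofFn ab.1).foldl flipCoord q.1, (List.ofFn ab.1).reverse ++ i :: List.ofFn ab.2)
  have splice_injective : Function.Injective splice := by
    rintro ⟨a, b⟩ ⟨a', b'⟩ h
    obtain ⟨ha, hb⟩ := List.append_inj (congrArg Prod.snd h) (by simp)
    simp_all [splice]
  have splice_mem : ∀ ab ∈ Pa ×ˢ Pb,
      splice ab ∈ (crossingsOnlyAt f ℓ q t).image fun p => (p.1, List.ofFn p.2) := by
    rintro ⟨a, b⟩ hab
    simp only [Pa, Pb, mem_product, mem_filter, mem_univ, true_and, not_hits_iff] at hab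
    obtain ⟨w, hw⟩ := exists_ofFn_eq (ℓ := ℓ) (splice (a, b)).2 (by simp [splice]; omega)
    refine mem_image.2 ⟨((splice (a, b)).1, w), ?_, by rw [hw]⟩
    simp only [crossingsOnlyAt, mem_filter, mem_univ, true_and, hw, splice]
    have hlen : (List.ofFn a).length = t := List.length_ofFn
    refine ⟨?_, ?_, fun s hs hst => ?_⟩
    · simpa only [hlen] using posAt_splice_length q.1 i (List.ofFn a) (List.ofFn b)
    · simpa only [hlen, hq] using posAt_splice_length_succ q.1 i (List.ofFn a) (List.ofFn b)
    · exact not_influentialStep_splice f q.1 i hab.1 (hq ▸ hab.2) (by simp; omega) (by rwa [hlen])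
  calc #Pa * #Pb = #((Pa ×ˢ Pb).image splice) := by
        rw [card_image_of_injective _ splice_injective, card_product]
    _ ≤ #((crossingsOnlyAt f ℓ q t).image fun p => (p.1, List.ofFn p.2)) :=
        card_le_card fun _ h => by
          obtain ⟨ab, hab, rfl⟩ := mem_image.1 h
          exact splice_mem ab hab
    _ = #(crossingsOnlyAt f ℓ q t) :=
        card_image_of_injective _ fun p p' h => by simpa [Prod.ext_iff] using h

lemma pow_mul_pow_le_card_crossingsOnlyAt {ℓ t : ℕ} {q : Cube n × Cube n}
    (hq : hammingDist q.1 q.2 = 1) (h₁ : sticky f ℓ q.1) (h₂ : sticky f ℓ q.2) (ht : t < ℓ) :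
    n ^ ℓ * n ^ ℓ ≤ 4 * n ^ (ℓ + 1) * #(crossingsOnlyAt f ℓ q t) := by
  obtain ⟨i, hi⟩ := exists_eq_flipCoord_of_hammingDist_eq_one hq
  have ha := h₁.pow_le_two_mul_card.trans (Nat.mul_le_mul_left 2 (card_not_hits_le f q.1 ht.le))
  have hb := h₂.pow_le_two_mul_card.trans
    (Nat.mul_le_mul_left 2 (card_not_hits_le f q.2 (Nat.sub_le (ℓ - 1) t |>.trans (Nat.sub_le ℓ 1))))
  calc n ^ ℓ * n ^ ℓ ≤ 2 * (n ^ (ℓ - t) * #{a : Fin t → Fin n | ¬ hits f q.1 a}) *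
        (2 * (n ^ (ℓ - (ℓ - 1 - t)) * #{b : Fin (ℓ - 1 - t) → Fin n | ¬ hits f q.2 b})) :=
        Nat.mul_le_mul ha hb
    _ = 4 * n ^ (ℓ + 1) * (#{a : Fin t → Fin n | ¬ hits f q.1 a} *
        #{b : Fin (ℓ - 1 - t) → Fin n | ¬ hits f q.2 b}) := by
        rw [show ℓ + 1 = (ℓ - t) + (ℓ - (ℓ - 1 - t)) by omega, pow_add]; ring
    _ ≤ _ := Nat.mul_le_mul_left _ (card_mul_card_le_card_crossingsOnlyAt f hi ht)

end Crossings

lemma card_mul_pow_le_card_biUnion_crossingsOnlyAt {n : ℕ} (f : Cube n → Bool) (ℓ : ℕ) :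
    #(Fset f ℓ) * ℓ * (n ^ ℓ * n ^ ℓ) ≤
      4 * n ^ (ℓ + 1) * #((Fset f ℓ ×ˢ range ℓ).biUnion fun z => crossingsOnlyAt f ℓ z.1 z.2) := by
  have mem_I : ∀ z ∈ Fset f ℓ ×ˢ range ℓ,
      violating f z.1 ∧ sticky f ℓ z.1.1 ∧ sticky f ℓ z.1.2 ∧ z.2 < ℓ := by
    simp [Fset, and_assoc]
  have hdisj : ((Fset f ℓ ×ˢ range ℓ : Finset _) : Set _).PairwiseDisjoint
      fun z : (Cube n × Cube n) × ℕ => crossingsOnlyAt f ℓ z.1 z.2 := fun z hz _ _ hne =>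
    disjoint_crossingsOnlyAt (mem_I z hz).1.apply_fst_ne_apply_snd (mem_I z hz).2.2.2 hne
  rw [card_biUnion hdisj, mul_sum]
  calc #(Fset f ℓ) * ℓ * (n ^ ℓ * n ^ ℓ) = ∑ _z ∈ Fset f ℓ ×ˢ range ℓ, n ^ ℓ * n ^ ℓ := by
        simp [card_product]
    _ ≤ _ := sum_le_sum fun z hz =>
        pow_mul_pow_le_card_crossingsOnlyAt f (mem_I z hz).1.1 (mem_I z hz).2.1 (mem_I z hz).2.2.1
          (mem_I z hz).2.2.2

lemma div_le_div_of_mul_pow_le {n ℓ F a : ℕ} (h : F * ℓ * (n ^ ℓ * n ^ ℓ) ≤ 4 * n ^ (ℓ + 1) * a) :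
    (ℓ : ℝ) / (4 * n) * F / 2 ^ n ≤ a / (2 ^ n * n ^ ℓ) := by
  rcases Nat.eq_zero_or_pos n with rfl | hn
  · simp only [CharP.cast_eq_zero, mul_zero, div_zero, zero_mul, zero_div]
    positivity
  have h' : F * ℓ * n ^ ℓ ≤ 4 * n * a := Nat.le_of_mul_le_mul_right (calc
      F * ℓ * n ^ ℓ * n ^ ℓ = F * ℓ * (n ^ ℓ * n ^ ℓ) := by ring
      _ ≤ 4 * n ^ (ℓ + 1) * a := h
      _ = 4 * n * a * n ^ ℓ := by ring) (pow_pos hn ℓ)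
  calc (ℓ : ℝ) / (4 * n) * F / 2 ^ n = ((F * ℓ * n ^ ℓ : ℕ) : ℝ) / (4 * n) / (2 ^ n * n ^ ℓ) := by
        push_cast; field_simp
    _ ≤ ((4 * n * a : ℕ) : ℝ) / (4 * n) / (2 ^ n * n ^ ℓ) := by gcongr
    _ = a / (2 ^ n * n ^ ℓ) := by push_cast; field_simp

theorem walk_finds_sticky_violation_general (n ℓ : ℕ) (f : Cube n → Bool) :
    ((ℓ : ℝ) / (4 * n)) * ((Fset f ℓ).card : ℝ) / 2 ^ n
      ≤ ((univ.filter fun p : Cube n × (Fin ℓ → Fin n) =>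
            ∃ q ∈ Fset f ℓ,
              (∃ t, t < ℓ ∧ matchAt p.1 (List.ofFn p.2) t q) ∧
              (∀ t, t < ℓ → influentialStep f p.1 (List.ofFn p.2) t →
                matchAt p.1 (List.ofFn p.2) t q)).card : ℝ)
          / ((2 : ℝ) ^ n * (n : ℝ) ^ ℓ) := by
  refine div_le_div_of_mul_pow_le ((card_mul_pow_le_card_biUnion_crossingsOnlyAt f ℓ).trans
    (Nat.mul_le_mul_left _ (card_le_card ?_)))
  simp only [subset_iff, mem_biUnion, mem_product, mem_range, mem_filter, mem_univ, true_and]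
  rintro p ⟨⟨q, t⟩, ⟨hq, ht⟩, hp⟩
  refine ⟨q, hq, ⟨t, ht, matchAt_of_mem_crossingsOnlyAt hp⟩, fun s hs hinf => ?_⟩
  rw [eq_of_influentialStep_of_mem_crossingsOnlyAt hp hs hinf]
  exact matchAt_of_mem_crossingsOnlyAt hp

/-- for a length-`ℓ` walk from a uniform start, the probability of traversing some
edge of `F_ℓ` (the `ℓ`-sticky violating edges) while traversing no other influential edge is at
least `(ℓ/(4n)) · |F_ℓ|/2^n`. -/
theorem walk_finds_sticky_violation (n ℓ : ℕ) (hn : 0 < n) (f : Cube n → Bool) :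
    ((ℓ : ℝ) / (4 * n)) * ((Fset f ℓ).card : ℝ) / 2 ^ n
      ≤ ((univ.filter fun p : Cube n × (Fin ℓ → Fin n) =>
            ∃ q ∈ Fset f ℓ,
              (∃ t, t < ℓ ∧ matchAt p.1 (List.ofFn p.2) t q) ∧
              (∀ t, t < ℓ → influentialStep f p.1 (List.ofFn p.2) t →
                matchAt p.1 (List.ofFn p.2) t q)).card : ℝ)
          / ((2 : ℝ) ^ n * (n : ℝ) ^ ℓ) :=
  walk_finds_sticky_violation_general n ℓ f
end

section
/- Suppose f is ε-far from monotone and admits a KMS bipartite subgraph G = (A, B, E) of violating edges with |B| = σ·2^n, every vertex of B having degree exactly d, every vertex of A having degree at most 2d, and σ²d ≥ c·ε²/log⁴ n. If ℓ* satisfies 2ℓ*·I(f)/n ≤ σ/4, then the number of violating edges in E both of whose endpoints are ℓ*-sticky is at least σd·2^n/2. -/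
open Finset

open scoped Classical

/-!
A vertex that is not `ℓ`-sticky meets an influential edge on more than half of its `n ^ ℓ`
walks. For fixed steps `w` and time `t`, the map `x ↦ posAt x w t` is a bijection of the cube,
so counting pairs (start, walk) step by step bounds the non-sticky vertices by
`2ℓ · #(influential pairs) / n = 2ℓ · I(f) · 2^n / n ≤ σ/4 · 2^n`. Every edge of `E` goes from
an `f = 1` vertex to an `f = 0` vertex, so a vertex is a tail only or a head only and meets at
most `2d` edges of `E`. Hence at most `σ/4 · 2^n · 2d`, half of the `σd · 2^n` edges, have a
non-sticky endpoint.
-/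

section FlipCoord
variable {n : ℕ}

lemma flipCoord_involutive (i : Fin n) : Function.Involutive (flipCoord · i) := by
  intro x
  funext j
  by_cases h : j = i
  · subst h; simp [flipCoord]
  · simp [flipCoord, Function.update_of_ne h]

lemma flipCoord_injective (x : Cube n) : Function.Injective (flipCoord x) := by
  intro i j h
  by_contra hij
  have := congrFun h i
  simp [flipCoord, Function.update_of_ne hij] at this

lemma hammingDist_eq_one_iff (x y : Cube n) : hammingDist x y = 1 ↔ ∃ i, flipCoord x i = y := by
  simp only [hammingDist, card_eq_one, Finset.ext_iff, mem_filter, mem_univ, true_and,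
    mem_singleton, funext_iff]
  refine exists_congr fun i => forall_congr' fun j => ?_
  by_cases h : j = i
  · subst h; cases hx : x j <;> cases y j <;> simp [flipCoord, hx]
  · simp [flipCoord, h]

end FlipCoord

section Walk
variable {n : ℕ}

lemma posAt_injective (w : List (Fin n)) (t : ℕ) : Function.Injective (posAt · w t) := by
  unfold posAt
  induction w.take t with
  | nil => exact fun _ _ h => h
  | cons i l ih => exact ih.comp (flipCoord_involutive i).injective

lemma posAt_succ (x : Cube n) (w : List (Fin n)) {t : ℕ} (ht : t < w.length) :
    posAt x w (t + 1) = flipCoord (posAt x w t) w[t] := by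
  rw [posAt, posAt, List.take_add_one, List.getElem?_eq_getElem ht, Option.toList_some,
    List.foldl_append, List.foldl_cons, List.foldl_nil]

lemma card_influentialStep (f : Cube n → Bool) {ℓ : ℕ} (w : Fin ℓ → Fin n) (t : Fin ℓ) :
    #{x | influentialStep f x (List.ofFn w) t} = #{y | f y ≠ f (flipCoord y (w t))} := by
  refine card_bijective (posAt · (List.ofFn w) t)
    (Finite.injective_iff_bijective.1 (posAt_injective _ _)) fun x => ?_
  simp only [mem_filter, mem_univ, true_and]
  rw [influentialStep, posAt_succ _ _ (by simp), List.getElem_ofFn]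

end Walk

lemma sum_comp_eval {ι α M : Type*} [Fintype ι] [DecidableEq ι] [Fintype α] [DecidableEq α]
    [AddCommMonoid M] (i : ι) (g : α → M) :
    ∑ w : ι → α, g (w i) = Fintype.card α ^ (Fintype.card ι - 1) • ∑ a, g a := by
  rw [← sum_fiberwise univ (fun w : ι → α => w i), smul_sum]
  refine sum_congr rfl fun a _ => ?_
  rw [sum_congr rfl fun w hw => by rw [(mem_filter.1 hw).2], sum_const]
  congr 1
  simpa using Fintype.card_filter_piFinset_const_eq_of_mem (univ : Finset α) i (mem_univ a)

def influentialPairs {n : ℕ} (f : Cube n → Bool) : Finset (Cube n × Cube n) :=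
  {p | hammingDist p.1 p.2 = 1 ∧ f p.1 ≠ f p.2}

lemma card_influentialPairs {n : ℕ} (f : Cube n → Bool) :
    #(influentialPairs f) = ∑ i, #{y | f y ≠ f (flipCoord y i)} := by
  have hfiber (y : Cube n) :
      #{z | hammingDist y z = 1 ∧ f y ≠ f z} = #{i | f y ≠ f (flipCoord y i)} := by
    rw [← card_image_of_injective _ (flipCoord_injective y)]
    congr 1
    ext z
    simp only [mem_filter, mem_univ, true_and, mem_image, hammingDist_eq_one_iff]
    exact ⟨fun ⟨⟨i, hi⟩, h⟩ => ⟨i, hi ▸ h, hi⟩, fun ⟨i, h, hi⟩ => ⟨⟨i, hi⟩, hi ▸ h⟩⟩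
  calc #(influentialPairs f)
      = ∑ y, #{z | hammingDist y z = 1 ∧ f y ≠ f z} := by
        simp only [influentialPairs, card_filter, Fintype.sum_prod_type]
    _ = ∑ y, #{i | f y ≠ f (flipCoord y i)} := sum_congr rfl fun y _ => hfiber y
    _ = ∑ i, #{y | f y ≠ f (flipCoord y i)} := by simp only [card_filter]; exact sum_comm

lemma totalInfluence_eq {n : ℕ} (hn : n ≠ 0) (f : Cube n → Bool) :
    totalInfluence n f = #(influentialPairs f) / 2 ^ n := by
  rw [totalInfluence, influentialPairs]
  field_simp

section Sticky
variable {n : ℕ} (f : Cube n → Bool)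

lemma mul_sum_card_influentialStep {ℓ : ℕ} (t : Fin ℓ) :
    n * ∑ w : Fin ℓ → Fin n, #{x | influentialStep f x (List.ofFn w) t}
      = n ^ ℓ * #(influentialPairs f) := by
  have hℓ : ℓ - 1 + 1 = ℓ := Nat.sub_add_cancel t.pos
  simp_rw [card_influentialStep, sum_comp_eval t (fun i => #{y | f y ≠ f (flipCoord y i)}),
    ← card_influentialPairs, Fintype.card_fin, smul_eq_mul, ← mul_assoc, ← pow_succ', hℓ]

lemma card_hits_le {ℓ : ℕ} (x : Cube n) :
    #{w : Fin ℓ → Fin n | hits f x w}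
      ≤ ∑ t : Fin ℓ, #{w : Fin ℓ → Fin n | influentialStep f x (List.ofFn w) t} := by
  refine (card_le_card fun w hw => ?_).trans card_biUnion_le
  obtain ⟨t, ht, hinfl⟩ := (mem_filter.1 hw).2
  exact mem_biUnion.2 ⟨⟨t, ht⟩, mem_univ _, mem_filter.2 ⟨mem_univ _, hinfl⟩⟩

lemma mul_sum_card_hits_le (ℓ : ℕ) :
    n * ∑ x, #{w : Fin ℓ → Fin n | hits f x w} ≤ ℓ * (n ^ ℓ * #(influentialPairs f)) :=
  calc n * ∑ x, #{w : Fin ℓ → Fin n | hits f x w}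
      ≤ n * ∑ x, ∑ t : Fin ℓ, #{w : Fin ℓ → Fin n | influentialStep f x (List.ofFn w) t} := by
        gcongr with x; exact card_hits_le f x
    _ = ∑ t : Fin ℓ, n * ∑ w : Fin ℓ → Fin n, #{x | influentialStep f x (List.ofFn w) t} := by
        simp only [card_filter, mul_sum]
        rw [sum_comm]
        exact sum_congr rfl fun t _ => sum_comm
    _ = ℓ * (n ^ ℓ * #(influentialPairs f)) := by
        simp [mul_sum_card_influentialStep]

variable {f}

lemma pow_lt_two_mul_card_hits (hn : 0 < n) {ℓ : ℕ} {x : Cube n} (hx : ¬ sticky f ℓ x) :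
    n ^ ℓ < 2 * #{w : Fin ℓ → Fin n | hits f x w} := by
  have hsplit := card_filter_add_card_filter_not (s := (univ : Finset (Fin ℓ → Fin n)))
    (fun w => hits f x w)
  rw [card_univ, Fintype.card_fun, Fintype.card_fin, Fintype.card_fin] at hsplit
  rw [sticky, not_le, div_lt_iff₀ (by positivity)] at hx
  have : 2 * #{w : Fin ℓ → Fin n | ¬ hits f x w} < n ^ ℓ := by
    have : (2 * #{w : Fin ℓ → Fin n | ¬ hits f x w} : ℝ) < (n : ℝ) ^ ℓ := by linarith
    exact_mod_cast this
  omega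

lemma mul_card_not_sticky_le (hn : 0 < n) (ℓ : ℕ) :
    n * #{x | ¬ sticky f ℓ x} ≤ 2 * ℓ * #(influentialPairs f) := by
  refine Nat.le_of_mul_le_mul_left ?_ (pow_pos hn ℓ)
  calc n ^ ℓ * (n * #{x | ¬ sticky f ℓ x})
      = n * ∑ x ∈ {x | ¬ sticky f ℓ x}, n ^ ℓ := by rw [sum_const, smul_eq_mul]; ring
    _ ≤ n * ∑ x ∈ {x | ¬ sticky f ℓ x}, 2 * #{w : Fin ℓ → Fin n | hits f x w} := by
        gcongr with x hx; exact (pow_lt_two_mul_card_hits hn (mem_filter.1 hx).2).le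
    _ ≤ 2 * (n * ∑ x, #{w : Fin ℓ → Fin n | hits f x w}) := by
        rw [← mul_sum, mul_left_comm]; gcongr; exact subset_univ _
    _ ≤ 2 * (ℓ * (n ^ ℓ * #(influentialPairs f))) :=
        Nat.mul_le_mul_left 2 (mul_sum_card_hits_le f ℓ)
    _ = n ^ ℓ * (2 * ℓ * #(influentialPairs f)) := by ring

lemma card_not_sticky_le (hn : 0 < n) {ℓ : ℕ} {s : ℝ}
    (hℓ : 2 * ℓ * totalInfluence n f / n ≤ s) : (#{x | ¬ sticky f ℓ x} : ℝ) ≤ s * 2 ^ n := by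
  have hnR : (0 : ℝ) < n := by exact_mod_cast hn
  rw [totalInfluence_eq hn.ne', div_le_iff₀ hnR, mul_div_assoc', div_le_iff₀ (by positivity)] at hℓ
  have hcount : (n : ℝ) * #{x | ¬ sticky f ℓ x} ≤ 2 * ℓ * #(influentialPairs f) := by
    exact_mod_cast mul_card_not_sticky_le hn ℓ
  refine le_of_mul_le_mul_left ?_ hnR
  linarith

end Sticky

section Edges
variable {α : Type*} [DecidableEq α] (E : Finset (α × α))

lemma card_le_card_filter_add_mul [Fintype α] (P : α → Prop) [DecidablePred P] (D : ℕ)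
    (hdeg : ∀ v, ¬ P v → #{e ∈ E | e.1 = v ∨ e.2 = v} ≤ D) :
    #E ≤ #{e ∈ E | P e.1 ∧ P e.2} + #{v | ¬ P v} * D := by
  rw [← card_filter_add_card_filter_not (s := E) (fun e => P e.1 ∧ P e.2)]
  gcongr
  calc #{e ∈ E | ¬ (P e.1 ∧ P e.2)}
      ≤ #(({v | ¬ P v} : Finset α).biUnion fun v => {e ∈ E | e.1 = v ∨ e.2 = v}) := by
        refine card_le_card fun e he => ?_
        obtain ⟨heE, hbad⟩ := mem_filter.1 he
        simp only [mem_biUnion, mem_filter, mem_univ, true_and]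
        by_cases h₁ : P e.1
        · exact ⟨e.2, fun h₂ => hbad ⟨h₁, h₂⟩, heE, Or.inr rfl⟩
        · exact ⟨e.1, h₁, heE, Or.inl rfl⟩
    _ ≤ ∑ v ∈ {v | ¬ P v}, #{e ∈ E | e.1 = v ∨ e.2 = v} := card_biUnion_le
    _ ≤ #{v | ¬ P v} * D := sum_le_card_nsmul _ _ _ fun v hv => hdeg v (mem_filter.1 hv).2

variable {E}

lemma card_incident_le (htail_head : ∀ e ∈ E, ∀ e' ∈ E, e.1 ≠ e'.2) {D : ℕ}
    (hout : ∀ v, #{e ∈ E | e.1 = v} ≤ D) (hin : ∀ v, #{e ∈ E | e.2 = v} ≤ D) (v : α) :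
    #{e ∈ E | e.1 = v ∨ e.2 = v} ≤ D := by
  by_cases htail : ∃ e ∈ E, e.1 = v
  · obtain ⟨e, he, rfl⟩ := htail
    rw [filter_congr fun e' he' => or_iff_left fun h => htail_head e he e' he' h.symm]
    exact hout _
  · push Not at htail
    rw [filter_congr fun e' he' => or_iff_right (htail e' he')]
    exact hin v

end Edges

section KMS
variable {n d : ℕ} {f : Cube n → Bool} {A B : Finset (Cube n)} {E : Finset (Cube n × Cube n)}

lemma card_incident_le_two_mul (hE : ∀ p ∈ E, p.1 ∈ A ∧ p.2 ∈ B ∧ violating f p)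
    (hdegB : ∀ b ∈ B, (E.filter fun p => p.2 = b).card = d)
    (hdegA : ∀ a ∈ A, (E.filter fun p => p.1 = a).card ≤ 2 * d) (v : Cube n) :
    #{e ∈ E | e.1 = v ∨ e.2 = v} ≤ 2 * d := by
  refine card_incident_le (fun e he e' he' h => ?_) (fun v => ?_) (fun v => ?_) v
  · obtain ⟨-, -, -, -, htrue, -⟩ := hE e he
    obtain ⟨-, -, -, -, -, hfalse⟩ := hE e' he'
    rw [h, hfalse] at htrue
    exact Bool.false_ne_true htrue
  · by_cases hv : v ∈ A
    · exact hdegA v hv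
    · rw [filter_false_of_mem fun e he (h : e.1 = v) => hv (h ▸ (hE e he).1), card_empty]
      exact Nat.zero_le _
  · by_cases hv : v ∈ B
    · rw [hdegB v hv]; omega
    · rw [filter_false_of_mem fun e he (h : e.2 = v) => hv (h ▸ (hE e he).2.1), card_empty]
      exact Nat.zero_le _

end KMS

theorem kms_sticky_edges_general (n : ℕ) (hn : 0 < n) (f : Cube n → Bool) (σ : ℝ) (d ℓstar : ℕ)
    (A B : Finset (Cube n)) (E : Finset (Cube n × Cube n))
    (hE : ∀ p ∈ E, p.1 ∈ A ∧ p.2 ∈ B ∧ violating f p)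
    (hB : (B.card : ℝ) = σ * 2 ^ n)
    (hdegB : ∀ b ∈ B, (E.filter fun p => p.2 = b).card = d)
    (hdegA : ∀ a ∈ A, (E.filter fun p => p.1 = a).card ≤ 2 * d)
    (hℓ : 2 * ℓstar * totalInfluence n f / n ≤ σ / 4) :
    σ * d * 2 ^ n / 2
      ≤ ((E.filter fun p => sticky f ℓstar p.1 ∧ sticky f ℓstar p.2).card : ℝ) := by
  have hEcard : (#E : ℝ) = σ * d * 2 ^ n := by
    rw [card_eq_sum_card_fiberwise fun p hp => (hE p hp).2.1, sum_congr rfl hdegB, sum_const,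
      smul_eq_mul, Nat.cast_mul, hB]
    ring
  have hsplit := card_le_card_filter_add_mul E (sticky f ℓstar) (2 * d)
    fun v _ => card_incident_le_two_mul hE hdegB hdegA v
  have hbad : (#{x | ¬ sticky f ℓstar x} : ℝ) * (2 * d) ≤ σ / 4 * 2 ^ n * (2 * d) :=
    mul_le_mul_of_nonneg_right (card_not_sticky_le hn hℓ) (by positivity)
  have hsplitR : (#E : ℝ) ≤ #{e ∈ E | sticky f ℓstar e.1 ∧ sticky f ℓstar e.2}
      + #{x | ¬ sticky f ℓstar x} * (2 * d) := by exact_mod_cast hsplit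
  linarith

/-- given a KMS bipartite subgraph `(A, B, E)` of violating edges with
`|B| = σ·2^n`, `B`-degrees exactly `d`, `A`-degrees at most `2d`, `σ²d ≥ c·ε²/log⁴ n`, for a
function `f` that is `ε`-far from monotone, if `2ℓ*·I(f)/n ≤ σ/4` then at least `σd·2^n/2`
edges of `E` have both endpoints `ℓ*`-sticky. -/
theorem kms_sticky_edges (n : ℕ) (hn : 0 < n) (f : Cube n → Bool) (ε σ c : ℝ) (d ℓstar : ℕ)
    (A B : Finset (Cube n)) (E : Finset (Cube n × Cube n))
    (hε : 0 < ε) (hc : 0 < c) (hσ : 0 < σ)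
    (hfar : ∀ g : Cube n → Bool, (∀ x y : Cube n, x ≤ y → g x ≤ g y) →
      ε ≤ ((univ.filter fun x : Cube n => f x ≠ g x).card : ℝ) / 2 ^ n)
    (hE : ∀ p ∈ E, p.1 ∈ A ∧ p.2 ∈ B ∧ violating f p)
    (hB : (B.card : ℝ) = σ * 2 ^ n)
    (hdegB : ∀ b ∈ B, (E.filter fun p => p.2 = b).card = d)
    (hdegA : ∀ a ∈ A, (E.filter fun p => p.1 = a).card ≤ 2 * d)
    (hσd : c * ε ^ 2 / (Real.log n) ^ 4 ≤ σ ^ 2 * d)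
    (hℓ : 2 * ℓstar * totalInfluence n f / n ≤ σ / 4) :
    σ * d * 2 ^ n / 2
      ≤ ((E.filter fun p => sticky f ℓstar p.1 ∧ sticky f ℓstar p.2).card : ℝ) :=
  kms_sticky_edges_general n hn f σ d ℓstar A B E hE hB hdegB hdegA hℓ
end
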